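/- Let Z = X + Y be the join of two nonempty finite simple graphs, and suppose Z has n ≥ 3 vertices. If Z admits Laplacian fractional revival at time τ, i.e., U(τ)e_a = α e_a + β e_b for some distinct vertices a, b of Z and some α, β ∈ ℂ, then τ is an integer multiple of 2π/n. -/

import Mathlib

open Matrix

noncomputable def lapR {V : Type*} [Fintype V] [DecidableEq V] (G : SimpleGraph V) :
    Matrix V V ℝ :=
  letI := Classical.decRel G.Adj
  G.lapMatrix ℝ

noncomputable def lapC {V : Type*} [Fintype V] [DecidableEq V] (G : SimpleGraph V) :
    Matrix V V ℂ :=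
  (lapR G).map Complex.ofReal

noncomputable def transition {V : Type*} [Fintype V] [DecidableEq V] (G : SimpleGraph V)
    (t : ℝ) : Matrix V V ℂ :=
  NormedSpace.exp ((Complex.I * (t : ℂ)) • lapC G)

/-- proper Laplacian fractional revival between distinct vertices `a, b` at time `τ`. -/
def properLaFR {V : Type*} [Fintype V] [DecidableEq V] (G : SimpleGraph V) (a b : V)
    (τ : ℝ) : Prop :=
  a ≠ b ∧ ∃ α β : ℂ, β ≠ 0 ∧
    transition G τ *ᵥ Pi.single a 1 =
      α • (Pi.single a 1 : V → ℂ) + β • (Pi.single b 1 : V → ℂ)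

/-- Laplacian periodicity at vertex `a` at time `τ`. -/
def periodicAt {V : Type*} [Fintype V] [DecidableEq V] (G : SimpleGraph V) (a : V)
    (τ : ℝ) : Prop :=
  ∃ α : ℂ, transition G τ *ᵥ Pi.single a 1 = α • (Pi.single a 1 : V → ℂ)

/-- The matrix of the orthogonal projection onto the `μ`-eigenspace of the Laplacian. -/
noncomputable def eigProj {V : Type*} [Fintype V] [DecidableEq V] (G : SimpleGraph V)
    (μ : ℝ) : Matrix V V ℝ :=
  Matrix.toEuclideanLin.symm
    ((Module.End.eigenspace (Matrix.toEuclideanLin (lapR G)) μ).subtype ∘ₗ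
      (Submodule.orthogonalProjectionOnto
        (Module.End.eigenspace (Matrix.toEuclideanLin (lapR G)) μ) :
          EuclideanSpace ℝ V →L[ℝ] _).toLinearMap)

def StronglyCospectral {V : Type*} [Fintype V] [DecidableEq V] (G : SimpleGraph V)
    (a b : V) : Prop :=
  ∀ μ : ℝ, eigProj G μ *ᵥ Pi.single a 1 = eigProj G μ *ᵥ Pi.single b 1 ∨
    eigProj G μ *ᵥ Pi.single a 1 = -(eigProj G μ *ᵥ Pi.single b 1)

def PhiPlus {V : Type*} [Fintype V] [DecidableEq V] (G : SimpleGraph V) (a b : V) :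
    Set ℝ :=
  {μ | eigProj G μ *ᵥ Pi.single a 1 = eigProj G μ *ᵥ Pi.single b 1 ∧
    eigProj G μ *ᵥ Pi.single a 1 ≠ 0}

def PhiMinus {V : Type*} [Fintype V] [DecidableEq V] (G : SimpleGraph V) (a b : V) :
    Set ℝ :=
  {μ | eigProj G μ *ᵥ Pi.single a 1 = -(eigProj G μ *ᵥ Pi.single b 1) ∧
    eigProj G μ *ᵥ Pi.single a 1 ≠ 0}

def eigSupport {V : Type*} [Fintype V] [DecidableEq V] (G : SimpleGraph V) (a : V) :
    Set ℝ :=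
  {μ | eigProj G μ *ᵥ Pi.single a 1 ≠ 0}

/-- `r` is an integer multiple of the natural number `g`. -/
def intDvd (g : ℕ) (r : ℝ) : Prop := ∃ k : ℤ, r = (g : ℝ) * k

/-!
We may assume `a ∈ S`. The vectors that are constant on `Sᶜ` form an `L`-invariant subspace
containing `e_a`, so `U(τ) e_a` takes a single value `c` on `Sᶜ`. As `L` is symmetric with
`L 𝟙 = 0` and `L x = n x` for `x = n 𝟙_{Sᶜ} - |Sᶜ| 𝟙`, pairing `U(τ) e_a` with `𝟙` and with `x`
gives `c = (1 - e^{iτn}) / n`. If `b ∈ S`, then `c = (U(τ) e_a)_y = 0` for any `y ∉ S`. Otherwise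
`β = c`, while `α + β = 1` (column sums of `U(τ)`) and `|α|² + |β|² = 1` (unitarity); with
`|e^{iτn}| = 1` this forces `e^{iτn} = 1` once `n ≠ 2`. Hence `τ n ∈ 2πℤ`.
-/

open scoped Nat
open Finset NormedSpace

namespace Matrix
variable {m 𝕂 : Type*} [Fintype m] [DecidableEq m] [RCLike 𝕂]

theorem hasSum_exp_mulVec (A : Matrix m m 𝕂) (x : m → 𝕂) :
    HasSum (fun k : ℕ => (k ! : 𝕂)⁻¹ • (A ^ k *ᵥ x)) (exp A *ᵥ x) := by
  open scoped Norms.Operator in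
  have hA : HasSum (fun k : ℕ => (k ! : 𝕂)⁻¹ • A ^ k) (exp A) := by
    rw [exp_eq_tsum 𝕂]
    exact (expSeries_summable' A).hasSum
  have hAx : HasSum (fun k : ℕ => ((k ! : 𝕂)⁻¹ • A ^ k) *ᵥ x) (exp A *ᵥ x) :=
    hA.map (mulVec.addMonoidHomLeft x) (continuous_id.matrix_mulVec continuous_const)
  simpa only [smul_mulVec] using hAx

theorem exp_mulVec_of_mulVec_eq_smul {A : Matrix m m 𝕂} {x : m → 𝕂} {μ : 𝕂}
    (h : A *ᵥ x = μ • x) : exp A *ᵥ x = exp μ • x := by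
  have hpow (k : ℕ) : A ^ k *ᵥ x = μ ^ k • x := by
    induction k with
    | zero => simp
    | succ k ih => rw [pow_succ, ← mulVec_mulVec, h, mulVec_smul, ih, smul_smul, pow_succ']
  refine (hasSum_exp_mulVec A x).unique ?_
  simp_rw [hpow, smul_smul]
  rw [exp_eq_tsum 𝕂]
  exact (expSeries_summable' (𝕂 := 𝕂) μ).hasSum.smul_const x

theorem exp_mulVec_mem {A : Matrix m m 𝕂} {W : Submodule 𝕂 (m → 𝕂)}
    (hA : ∀ u ∈ W, A *ᵥ u ∈ W) {x : m → 𝕂} (hx : x ∈ W) : exp A *ᵥ x ∈ W := by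
  have hpow (k : ℕ) : A ^ k *ᵥ x ∈ W := by
    induction k with
    | zero => simpa using hx
    | succ k ih => rw [pow_succ', ← mulVec_mulVec]; exact hA _ ih
  exact W.closed_of_finiteDimensional.mem_of_tendsto (hasSum_exp_mulVec A x).tendsto_sum_nat
    (.of_forall fun s => W.sum_mem fun k _ => W.smul_mem _ (hpow k))

theorem conjTranspose_exp_mul_exp_of_conjTranspose_eq_neg {A : Matrix m m 𝕂} (hA : Aᴴ = -A) :
    (exp A)ᴴ * exp A = 1 := by
  rw [← exp_conjTranspose, hA, exp_neg]
  exact nonsing_inv_mul _ ((isUnit_iff_isUnit_det _).mp (isUnit_exp A))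

end Matrix

def constOn {V : Type*} (R : Type*) [Semiring R] (T : Set V) : Submodule R (V → R) where
  carrier := {u | ∀ i ∈ T, ∀ j ∈ T, u i = u j}
  add_mem' hu hv i hi j hj := by simp [hu i hi j hj, hv i hi j hj]
  zero_mem' _ _ _ _ := rfl
  smul_mem' c u hu i hi j hj := by simp [hu i hi j hj]

namespace SimpleGraph
variable {V R : Type*} [Fintype V] [DecidableEq V] {G : SimpleGraph V} [DecidableRel G.Adj]

theorem lapMatrix_mulVec_apply_of_forall_adj [NonAssocRing R] {i : V} {T : Finset V}
    (hT : ∀ j ∈ T, G.Adj i j) {u : V → R} (hu : ∀ j ∉ T, u j = u i) :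
    (G.lapMatrix R *ᵥ u) i = ∑ j ∈ T, (u i - u j) := by
  rw [lapMatrix_mulVec_apply, ← card_neighborFinset_eq_degree, ← nsmul_eq_mul, ← sum_const,
    ← sum_sub_distrib]
  refine (sum_subset (fun j hj => (mem_neighborFinset G i j).mpr (hT j hj)) ?_).symm
  intro j _ hj
  rw [hu j hj, sub_self]

variable {S : Set V} [DecidablePred (· ∈ S)]

theorem lapMatrix_mulVec_indicator_compl_of_join [NonAssocRing R]
    (hjoin : ∀ u ∈ S, ∀ v ∈ Sᶜ, G.Adj u v) :
    G.lapMatrix R *ᵥ Sᶜ.indicator 1 =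
      Fintype.card V • Sᶜ.indicator 1 - #{j | j ∉ S} • (1 : V → R) := by
  ext i
  by_cases hi : i ∈ S
  · rw [lapMatrix_mulVec_apply_of_forall_adj (T := {j | j ∉ S})
      (fun j hj => hjoin i hi j (by simpa using hj)) (fun j hj => by simp_all)]
    simp [hi, Set.indicator_apply, sum_ite_of_false]
  · rw [lapMatrix_mulVec_apply_of_forall_adj (T := {j | j ∈ S})
      (fun j hj => (hjoin j (by simpa using hj) i hi).symm) (fun j hj => by simp_all)]
    have hcard : #{j | j ∈ S} + #{j | j ∉ S} = Fintype.card V :=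
      card_filter_add_card_filter_not _
    simp [hi, Set.indicator_apply, sum_ite_of_true, ← hcard]

theorem lapMatrix_mulVec_mem_constOn_compl_of_join [Ring R]
    (hjoin : ∀ u ∈ S, ∀ v ∈ Sᶜ, G.Adj u v) {u : V → R} (hu : u ∈ constOn R Sᶜ) :
    G.lapMatrix R *ᵥ u ∈ constOn R Sᶜ := by
  have row (k : V) (hk : k ∈ Sᶜ) : (G.lapMatrix R *ᵥ u) k = ∑ l with l ∈ S, (u k - u l) :=
    lapMatrix_mulVec_apply_of_forall_adj (fun l hl => (hjoin l (by simpa using hl) k hk).symm)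
      (fun l hl => hu l (by simpa using hl) k hk)
  intro i hi j hj
  rw [row i hi, row j hj, hu i hi j hj]

end SimpleGraph

open Complex SimpleGraph

section Transition
variable {V : Type*} [Fintype V] [DecidableEq V] (G : SimpleGraph V) (t : ℝ)

theorem lapC_eq_lapMatrix [DecidableRel G.Adj] : lapC G = G.lapMatrix ℂ := by
  have hR : lapR G = G.lapMatrix ℝ := by
    unfold lapR
    congr!
  ext i j
  rw [lapC, hR, map_apply]
  by_cases h : i = j <;> by_cases h' : G.Adj i j <;> simp [lapMatrix, degMatrix, h, h']

theorem transition_eq_exp [DecidableRel G.Adj] :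
    transition G t = exp ((I * t) • G.lapMatrix ℂ) := by
  rw [transition, lapC_eq_lapMatrix]

theorem transition_mulVec_of_lapMatrix_mulVec_eq_smul [DecidableRel G.Adj] {x : V → ℂ} {μ : ℂ}
    (h : G.lapMatrix ℂ *ᵥ x = μ • x) : transition G t *ᵥ x = Complex.exp (I * t * μ) • x := by
  have hA : ((I * t) • G.lapMatrix ℂ) *ᵥ x = (I * t * μ) • x := by
    rw [smul_mulVec, h, smul_smul]
  rw [transition_eq_exp, Matrix.exp_mulVec_of_mulVec_eq_smul hA, exp_eq_exp_ℂ]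

theorem transition_mulVec_mem [DecidableRel G.Adj] {W : Submodule ℂ (V → ℂ)}
    (hW : ∀ u ∈ W, G.lapMatrix ℂ *ᵥ u ∈ W) {x : V → ℂ} (hx : x ∈ W) :
    transition G t *ᵥ x ∈ W := by
  rw [transition_eq_exp]
  refine Matrix.exp_mulVec_mem (fun u hu => ?_) hx
  rw [smul_mulVec]
  exact W.smul_mem _ (hW u hu)

theorem transition_mulVec_const : transition G t *ᵥ (fun _ => 1) = fun _ => 1 := by
  classical
  rw [transition_mulVec_of_lapMatrix_mulVec_eq_smul G t (μ := 0)
    (by rw [lapMatrix_mulVec_const_eq_zero, zero_smul]), mul_zero, Complex.exp_zero, one_smul]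

theorem transpose_transition : (transition G t)ᵀ = transition G t := by
  classical
  rw [transition_eq_exp, ← Matrix.exp_transpose, transpose_smul, (G.isSymm_lapMatrix ℂ).eq]

theorem conjTranspose_transition_mul_self : (transition G t)ᴴ * transition G t = 1 := by
  classical
  rw [transition_eq_exp]
  refine Matrix.conjTranspose_exp_mul_exp_of_conjTranspose_eq_neg ?_
  rw [conjTranspose_smul, (G.isHermitian_lapMatrix ℂ).eq, ← neg_smul]
  simp

theorem sum_transition_mulVec_single (a : V) :
    ∑ j, (transition G t *ᵥ Pi.single a 1) j = 1 := by
  have h := dotProduct_mulVec (fun _ => (1 : ℂ)) (transition G t) (Pi.single a 1)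
  rw [← mulVec_transpose, transpose_transition, transition_mulVec_const] at h
  simpa [dotProduct] using h

theorem star_dotProduct_transition_mulVec_single (a : V) :
    star (transition G t *ᵥ Pi.single a 1) ⬝ᵥ (transition G t *ᵥ Pi.single a 1) = 1 := by
  rw [star_mulVec, dotProduct_mulVec, vecMul_vecMul, conjTranspose_transition_mul_self]
  simp

theorem add_eq_one_and_normSq_add_normSq_eq_one_of_transition_mulVec_single {a b : V}
    (hab : a ≠ b) {α β : ℂ}
    (hfr : transition G t *ᵥ Pi.single a 1 = α • Pi.single a 1 + β • Pi.single b 1) :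
    α + β = 1 ∧ normSq α + normSq β = 1 := by
  have hsum := sum_transition_mulVec_single G t a
  have hnorm := star_dotProduct_transition_mulVec_single G t a
  rw [hfr] at hsum hnorm
  simp [hab, sum_add_distrib, Pi.single_apply, Complex.mul_conj] at hsum hnorm
  exact ⟨hsum, by exact_mod_cast hnorm⟩

theorem transition_mulVec_single_mem_constOn_compl_of_join {S : Set V}
    (hjoin : ∀ u ∈ S, ∀ v ∈ Sᶜ, G.Adj u v) {a : V} (ha : a ∈ S) :
    transition G t *ᵥ Pi.single a 1 ∈ constOn ℂ Sᶜ := by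
  classical
  refine transition_mulVec_mem G t
    (fun u hu => lapMatrix_mulVec_mem_constOn_compl_of_join hjoin hu) fun i hi j hj => ?_
  rw [Pi.single_eq_of_ne (by rintro rfl; exact hi ha),
    Pi.single_eq_of_ne (by rintro rfl; exact hj ha)]

theorem transition_mulVec_single_apply_of_join {S : Set V}
    (hjoin : ∀ u ∈ S, ∀ v ∈ Sᶜ, G.Adj u v) {a y : V} (ha : a ∈ S) (hy : y ∉ S) :
    (transition G t *ᵥ Pi.single a 1) y =
      (1 - Complex.exp (I * t * Fintype.card V)) / Fintype.card V := by
  classical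
  set w := transition G t *ᵥ Pi.single a 1 with hw
  set q := #{j | j ∉ S}
  have hconst : ∀ j ∉ S, w j = w y := fun j hj =>
    transition_mulVec_single_mem_constOn_compl_of_join G t hjoin ha j hj y hy
  set x : V → ℂ := Fintype.card V • Sᶜ.indicator 1 - q • 1 with hx
  have hxeig : G.lapMatrix ℂ *ᵥ x = (Fintype.card V : ℂ) • x := by
    rw [hx, mulVec_sub, mulVec_smul, mulVec_smul, lapMatrix_mulVec_indicator_compl_of_join hjoin,
      show G.lapMatrix ℂ *ᵥ 1 = 0 from G.lapMatrix_mulVec_const_eq_zero, smul_zero, sub_zero,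
      Nat.cast_smul_eq_nsmul]
  have hdot : x ⬝ᵥ w = Complex.exp (I * t * Fintype.card V) * x a := by
    rw [hw, dotProduct_mulVec, ← mulVec_transpose, transpose_transition,
      transition_mulVec_of_lapMatrix_mulVec_eq_smul G t hxeig, smul_dotProduct, dotProduct_single,
      mul_one, smul_eq_mul]
  have hxa : x a = -q := by simp [x, ha]
  have hind : Sᶜ.indicator 1 ⬝ᵥ w = q * w y := by
    simp only [dotProduct, Set.indicator_apply, Set.mem_compl_iff, Pi.one_apply, ite_mul, one_mul,
      zero_mul]
    rw [← sum_filter, sum_congr rfl fun j hj => hconst j (mem_filter.mp hj).2, sum_const,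
      nsmul_eq_mul]
  have hxw : x ⬝ᵥ w = Fintype.card V * (q * w y) - q := by
    rw [hx, sub_dotProduct, smul_dotProduct, smul_dotProduct, hind, one_dotProduct,
      sum_transition_mulVec_single, nsmul_eq_mul, nsmul_eq_mul, mul_one]
  have hq : (q : ℂ) ≠ 0 := Nat.cast_ne_zero.mpr (card_ne_zero_of_mem (by simpa using hy))
  have hn : (Fintype.card V : ℂ) ≠ 0 := Nat.cast_ne_zero.mpr (Fintype.card_pos_iff.mpr ⟨a⟩).ne'
  rw [hxw, hxa] at hdot
  rw [eq_div_iff hn]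
  refine mul_left_cancel₀ hq ?_
  linear_combination hdot

end Transition

theorem Complex.eq_one_of_add_eq_one_of_normSq_add_normSq_eq_one {α β E : ℂ} {n : ℕ}
    (hn : 3 ≤ n) (hE : normSq E = 1) (hβ : β * n = 1 - E) (hαβ : α + β = 1)
    (hnorm : normSq α + normSq β = 1) : E = 1 := by
  obtain rfl : α = 1 - β := eq_sub_of_add_eq hαβ
  have hn' : (3 : ℝ) ≤ n := by exact_mod_cast hn
  have hre : β.re * n = 1 - E.re := by simpa using congrArg re hβ
  have him : β.im * n = -E.im := by simpa using congrArg im hβ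
  rw [normSq_apply] at hE
  simp only [normSq_apply, sub_re, sub_im, one_re, one_im] at hnorm
  have h1 : β.re ^ 2 + β.im ^ 2 = β.re := by linear_combination hnorm / 2
  have h2 : (n : ℝ) ^ 2 * (β.re ^ 2 + β.im ^ 2) = 2 * n * β.re := by
    linear_combination (β.re * n + 1 - E.re - 2) * hre + (β.im * n - E.im) * him + hE
  have hβre : β.re = 0 := by
    have : β.re * (n * (n - 2)) = 0 := by linear_combination h2 - (n : ℝ) ^ 2 * h1
    exact (mul_eq_zero.mp this).resolve_right (mul_pos (by linarith) (by linarith)).ne'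
  have hβim : β.im = 0 := by nlinarith
  apply Complex.ext <;> simp <;> nlinarith

/-- On a join graph (all edges present between a nonempty set
`S` and its nonempty complement) on `n ≥ 3` vertices, Laplacian fractional
revival can only occur at integer multiples of `2π/n`. -/
theorem join_LaFR_time {V : Type*} [Fintype V] [DecidableEq V]
    (Z : SimpleGraph V) (S : Set V) (hS : S.Nonempty) (hS' : Sᶜ.Nonempty)
    (hjoin : ∀ u ∈ S, ∀ v ∈ Sᶜ, Z.Adj u v)
    (hn : 3 ≤ Fintype.card V) (τ : ℝ)
    (h : ∃ (a b : V) (α β : ℂ), a ≠ b ∧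
      transition Z τ *ᵥ Pi.single a 1 =
        α • (Pi.single a 1 : V → ℂ) + β • (Pi.single b 1 : V → ℂ)) :
    ∃ k : ℤ, τ = (k : ℝ) * (2 * Real.pi / (Fintype.card V : ℝ)) := by
  obtain ⟨a, b, α, β, hab, hfr⟩ := h
  wlog ha : a ∈ S generalizing S
  · exact this Sᶜ hS' (by rwa [compl_compl])
      (fun u hu v hv => (hjoin v (by simpa using hv) u hu).symm) ha
  have hn0 : (Fintype.card V : ℂ) ≠ 0 := Nat.cast_ne_zero.mpr (by omega)
  suffices hE : Complex.exp (I * τ * Fintype.card V) = 1 by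
    obtain ⟨k, hk⟩ := Complex.exp_eq_one_iff.mp hE
    have h : τ * Fintype.card V = k * (2 * Real.pi) := by simpa using congrArg im hk
    exact ⟨k, by rw [mul_div_assoc', eq_div_iff (Nat.cast_ne_zero.mpr (by omega)), h]⟩
  by_cases hb : b ∈ S
  · obtain ⟨y, hy⟩ := hS'
    have hy0 : (α • Pi.single a 1 + β • Pi.single b 1 : V → ℂ) y = 0 := by
      simp [show y ≠ a by rintro rfl; exact hy ha, show y ≠ b by rintro rfl; exact hy hb]
    rw [← hfr, transition_mulVec_single_apply_of_join Z τ hjoin ha hy, div_eq_zero_iff,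
      sub_eq_zero] at hy0
    exact (hy0.resolve_right hn0).symm
  · obtain ⟨hαβ, hnorm⟩ :=
      add_eq_one_and_normSq_add_normSq_eq_one_of_transition_mulVec_single Z τ hab hfr
    have hβ := transition_mulVec_single_apply_of_join Z τ hjoin ha hb
    rw [hfr] at hβ
    simp only [Pi.add_apply, Pi.smul_apply, Pi.single_eq_same, Pi.single_eq_of_ne' hab,
      smul_eq_mul, mul_zero, mul_one, zero_add] at hβ
    refine Complex.eq_one_of_add_eq_one_of_normSq_add_normSq_eq_one hn ?_
      (by rw [hβ, div_mul_cancel₀ _ hn0]) hαβ hnorm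
    rw [normSq_eq_norm_sq, norm_exp]
    simp
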